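/- Assume E_S is T-torsion-free and write H := H^{dim S}_{mS}(S) ≅ E_S / Ann_{E_S}(J), where J ⊆ R is an E_S-ideal. Then the H-special ideals of S are exactly the ideals (L :_R J)·S, where L ranges over the E_S-special ideals of R contained in J. -/

import Mathlib

open IsLocalRing

/-- The `q`-th Frobenius power of an ideal: the ideal generated by `q`-th powers of elements. -/
def Ideal.frobPow {R : Type*} [CommSemiring R] (q : ℕ) (I : Ideal R) : Ideal R :=
  Ideal.span ((fun a => a ^ q) '' (I : Set R))

/-- A `q`-Frobenius map on a module `M`: additive, with `ψ (r • x) = r ^ q • ψ x`. -/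
structure FrobeniusMap (R : Type*) [CommSemiring R] (M : Type*) [AddCommMonoid M]
    [Module R M] (q : ℕ) where
  toFun : M → M
  map_add' : ∀ x y, toFun (x + y) = toFun x + toFun y
  map_smul' : ∀ (r : R) (x : M), toFun (r • x) = r ^ q • toFun x

/-- `E` is an injective hull of the residue field of the local ring `R`. -/
def IsInjectiveHullOfResidueField (R : Type*) [CommRing R] [IsLocalRing R]
    (E : Type*) [AddCommGroup E] [Module R E] : Prop :=
  Module.Injective R E ∧
    ∃ ι : ResidueField R →ₗ[R] E, Function.Injective ι ∧
      ∀ N : Submodule R E, N ≠ ⊥ → ∃ x, x ≠ 0 ∧ x ∈ N ∧ x ∈ LinearMap.range ι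

/-- Regularity for a Noetherian local ring: the maximal ideal is generated by
`dim R` elements. -/
def IsRegularLocal (R : Type*) [CommRing R] [IsLocalRing R] : Prop :=
  ∃ (n : ℕ) (x : Fin n → R), maximalIdeal R = Ideal.span (Set.range x) ∧
    ringKrullDim R = n

/-- `φ` is (up to normalization) the natural Frobenius on `E = E_R(R/m)`: every `e`-th
Frobenius map on `E` is uniquely of the form `u • φ^[e]`. -/
def IsNaturalFrobenius {R : Type*} [CommRing R] (p : ℕ) (E : Type*) [AddCommGroup E]
    [Module R E] (φ : FrobeniusMap R E p) : Prop :=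
  ∀ e : ℕ, 1 ≤ e → ∀ θ : FrobeniusMap R E (p ^ e),
    ∃! u : R, ∀ x : E, θ.toFun x = u • (φ.toFun)^[e] x

/-- The annihilator of an ideal `I` inside a module `E`, as a submodule of `E`. -/
def annIn {R : Type*} [CommRing R] (I : Ideal R) (E : Type*) [AddCommGroup E]
    [Module R E] : Submodule R E where
  carrier := { x | ∀ a ∈ I, a • x = 0 }
  add_mem' hx hy := fun a ha => by rw [smul_add, hx a ha, hy a ha, add_zero]
  zero_mem' := fun a _ => smul_zero a
  smul_mem' := fun r x hx a ha => by rw [smul_comm, hx a ha, smul_zero]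

/-- `ν_e = 1 + p + ⋯ + p^{e-1}`. -/
def nuExp (p e : ℕ) : ℕ := ∑ i ∈ Finset.range e, p ^ i

/-!
For `r ∉ J`, injectivity of `E` extends `R ⧸ (J : r) ↠ R ⧸ 𝔪 ↪ E` along the embedding
`R ⧸ (J : r) ↪ R ⧸ J` given by multiplication by `r`; the image `x` of `1` satisfies `J x = 0`
and `r x ≠ 0`. Hence `Ann_R (Ann_E J) ≤ J`. Given this, both inclusions follow from
`(Ann_E J :_R W) = (Ann_R W :_R J)`, passing from `M` to `W = Ann_E J + M` and back.

Mathlib's `Module.Injective R E` only quantifies over modules in the universe of `E`, so the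
extension needs `R` to be small relative to `E`: completeness embeds `R` into `∏ₙ R ⧸ 𝔪ⁿ`, and
each `R ⧸ 𝔪ⁿ` is built from finitely many copies of the residue field, which embeds in `E`.
-/

universe v

theorem AddMonoidHom.small_of_small_ker {M N : Type*} [AddGroup M] [AddGroup N] (f : M →+ N)
    [Small.{v} f.ker] [Small.{v} N] : Small.{v} M := by
  set s := Function.invFun f
  have hs (m : M) : f (s (f m)) = f m := Function.invFun_eq ⟨m, rfl⟩
  refine small_of_injective (f := fun m => (f m, (⟨-s (f m) + m, by simp [hs]⟩ : f.ker))) ?_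
  intro a b hab
  simp only [Prod.mk.injEq, Subtype.mk.injEq] at hab
  obtain ⟨hfab, hab⟩ := hab
  rw [hfab] at hab
  exact add_left_cancel hab

theorem Ideal.small_quotient_pow {R : Type*} [CommRing R] [IsNoetherianRing R] (I : Ideal R)
    [Small.{v} (R ⧸ I)] (n : ℕ) : Small.{v} (R ⧸ I ^ n) := by
  induction n with
  | zero =>
    have : Subsingleton (R ⧸ I ^ 0) := Ideal.Quotient.subsingleton_iff.mpr (by simp)
    infer_instance
  | succ n ih =>
    let π := Ideal.Quotient.factor (Ideal.pow_le_pow_right (I := I) n.le_succ)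
    obtain ⟨d, x, hx⟩ := Submodule.fg_iff_exists_fin_generating_family.mp
      (IsNoetherian.noetherian (I ^ n))
    suffices Small.{v} (π : R ⧸ I ^ (n + 1) →+ R ⧸ I ^ n).ker from
      AddMonoidHom.small_of_small_ker (π : R ⧸ I ^ (n + 1) →+ R ⧸ I ^ n)
    refine small_of_injective_of_exists
      (fun c : Fin d → R ⧸ I => Ideal.Quotient.mk (I ^ (n + 1)) (∑ i, (c i).out * x i))
      Subtype.val_injective ?_
    rintro ⟨y, hy⟩
    obtain ⟨z, rfl⟩ := Ideal.Quotient.mk_surjective y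
    have hz : z ∈ I ^ n := by simpa [π, Ideal.Quotient.eq_zero_iff_mem] using hy
    rw [← hx] at hz
    obtain ⟨c, rfl⟩ := (Submodule.mem_span_range_iff_exists_fun R).mp hz
    refine ⟨fun i => Ideal.Quotient.mk I (c i), ?_⟩
    rw [Ideal.Quotient.eq, ← Finset.sum_sub_distrib]
    refine Ideal.sum_mem _ fun i _ => ?_
    rw [smul_eq_mul, ← sub_mul, pow_succ']
    refine Ideal.mul_mem_mul ?_ (hx ▸ Submodule.subset_span (Set.mem_range_self i))
    rw [← Ideal.Quotient.eq, Ideal.Quotient.mk_out]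

theorem IsHausdorff.small {R : Type*} [CommRing R] [IsNoetherianRing R] (I : Ideal R)
    [IsHausdorff I R] [Small.{v} (R ⧸ I)] : Small.{v} R :=
  have := I.small_quotient_pow
  small_of_injective (f := fun r n => Ideal.Quotient.mk (I ^ n) r) fun a b hab =>
    congrFun (IsHausdorff.funext' I (f := fun _ : Unit => a) (g := fun _ => b)
      fun n _ => congrFun hab n) ()

theorem annihilator_annIn_le {R : Type*} [CommRing R] [IsLocalRing R] {E : Type v}
    [AddCommGroup E] [Module R E] [Small.{v} R] [Module.Injective R E]
    {ι : ResidueField R →ₗ[R] E} (hι : Function.Injective ι) (J : Ideal R) :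
    (annIn J E).annihilator ≤ J := by
  intro r hr
  by_contra hrJ
  set K : Ideal R := J.colon {r}
  have hK : K ≤ maximalIdeal R :=
    le_maximalIdeal fun h => hrJ (by simpa [K] using h.ge (Submodule.mem_top (x := 1)))
  have hK_ker : K = LinearMap.ker (J.mkQ ∘ₗ LinearMap.mulRight R r) := by
    ext a
    simp only [K, LinearMap.mem_ker, LinearMap.comp_apply, LinearMap.mulRight_apply,
      Submodule.mkQ_apply, Submodule.Quotient.mk_eq_zero, Submodule.mem_colon_singleton,
      smul_eq_mul]
  let i : (R ⧸ K) →ₗ[R] R ⧸ J := K.liftQ _ hK_ker.le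
  have hi : Function.Injective i :=
    LinearMap.ker_eq_bot.mp (Submodule.ker_liftQ_eq_bot' _ _ hK_ker)
  obtain ⟨F, hF⟩ := Module.Injective.extension_property R E _ _ i hi
    (ι ∘ₗ Submodule.factor hK)
  have hx : F (J.mkQ 1) ∈ annIn J E := fun a ha => by
    rw [← map_smul, ← J.mkQ.map_smul, smul_eq_mul, mul_one, (J.mkQ_apply a).trans
      ((Submodule.Quotient.mk_eq_zero J).mpr ha), map_zero]
  have hrx : r • F (J.mkQ 1) = ι 1 :=
    calc r • F (J.mkQ 1) = F (i (K.mkQ 1)) := by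
          rw [← map_smul, ← J.mkQ.map_smul, smul_eq_mul, mul_one]
          simp only [i, Submodule.mkQ_apply, Submodule.liftQ_apply, LinearMap.comp_apply,
            LinearMap.mulRight_apply, one_mul]
      _ = ι (Submodule.factor hK (K.mkQ 1)) := LinearMap.congr_fun hF _
      _ = ι 1 := rfl
  exact one_ne_zero (hι (by rw [← hrx, Submodule.mem_annihilator.mp hr _ hx, map_zero]))

theorem IsInjectiveHullOfResidueField.small {R : Type*} [CommRing R] [IsLocalRing R]
    [IsNoetherianRing R] [IsHausdorff (maximalIdeal R) R] {E : Type v} [AddCommGroup E]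
    [Module R E] (hE : IsInjectiveHullOfResidueField R E) : Small.{v} R := by
  obtain ⟨-, ι, hι, -⟩ := hE
  have : Small.{v} (R ⧸ maximalIdeal R) := small_of_injective hι
  exact IsHausdorff.small (maximalIdeal R)

section annIn

variable {R : Type*} [CommRing R] {E : Type*} [AddCommGroup E] [Module R E]

theorem annIn_antitone {I J : Ideal R} (h : I ≤ J) : annIn J E ≤ annIn I E :=
  fun _ hx a ha => hx a (h ha)

theorem colon_annIn_eq_colon_annihilator (J : Ideal R) (W : Submodule R E) :
    (annIn J E).colon W = W.annihilator.colon J := by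
  ext r
  simp only [Submodule.mem_colon, SetLike.mem_coe, Submodule.mem_annihilator, smul_assoc]
  exact ⟨fun h a ha w hw => smul_comm a r w ▸ h w hw a ha,
    fun h w hw a ha => (smul_comm a r w).trans (h a ha w hw)⟩

theorem colon_annihilator_annIn_sup (J : Ideal R) (M : Submodule R E) :
    (annIn J E ⊔ M).annihilator.colon J = M.annihilator.colon J := by
  have hJ : (annIn J E).annihilator.colon J = ⊤ :=
    (Submodule.colon_eq_top_iff_subset _).mpr fun a ha =>
      Submodule.mem_annihilator.mpr fun x hx => hx a ha
  rw [Submodule.annihilator_sup, Submodule.inf_colon, hJ, top_inf_eq]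

end annIn

theorem Submodule.mapsTo_sup {R M : Type*} [Semiring R] [AddCommMonoid M] [Module R M]
    {f : M → M} (hf : ∀ x y, f (x + y) = f x + f y) {N P : Submodule R M}
    (hN : Set.MapsTo f N N) (hP : Set.MapsTo f P P) : Set.MapsTo f ↑(N ⊔ P) ↑(N ⊔ P) := by
  intro x hx
  obtain ⟨y, hy, z, hz, rfl⟩ := Submodule.mem_sup.mp hx
  rw [hf]
  exact Submodule.add_mem_sup (hN hy) (hP hz)

theorem stmt17_general {R : Type*} [CommRing R] [IsLocalRing R] [IsNoetherianRing R]
    (p : ℕ)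
    (hcomp : IsAdicComplete (maximalIdeal R) R)
    (E : Type*) [AddCommGroup E] [Module R E]
    (hE : IsInjectiveHullOfResidueField R E)
    (φ : FrobeniusMap R E p)
    (I : Ideal R) (u : R)
    (J : Ideal R) (hJI : I ≤ J)
    (hJ : ∀ x ∈ annIn J E, u • φ.toFun x ∈ annIn J E) :
    { K : Ideal R |
        ∃ W : Submodule R E, annIn J E ≤ W ∧ W ≤ annIn I E ∧
          (∀ x ∈ W, u • φ.toFun x ∈ W) ∧ K = Submodule.colon (annIn J E) W } =
    { K : Ideal R |
        ∃ L : Ideal R,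
          (∃ M : Submodule R E, M ≤ annIn I E ∧ (∀ x ∈ M, u • φ.toFun x ∈ M) ∧
            L = M.annihilator) ∧
          L ≤ J ∧ K = Submodule.colon L J } := by
  have := hE.small
  obtain ⟨_, ι, hι, -⟩ := hE
  ext K
  constructor
  · rintro ⟨W, hJW, hWI, hWst, rfl⟩
    exact ⟨W.annihilator, ⟨W, hWI, hWst, rfl⟩,
      (Submodule.annihilator_mono hJW).trans (annihilator_annIn_le hι J),
      colon_annIn_eq_colon_annihilator J W⟩
  · rintro ⟨_, ⟨M, hMI, hMst, rfl⟩, -, rfl⟩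
    refine ⟨annIn J E ⊔ M, le_sup_left, sup_le (annIn_antitone hJI) hMI,
      Submodule.mapsTo_sup (fun x y => by rw [φ.map_add', smul_add]) hJ hMst, ?_⟩
    rw [colon_annIn_eq_colon_annihilator, colon_annihilator_annIn_sup]

/-- Assume `E_S = Ann_E I` (with `T` acting as the restriction of
`u • φ`) is `T`-torsion-free and let `J ⊆ R` be an `E_S`-ideal, so that
`H := H^{dim S}_{mS}(S) ≅ E_S / Ann_{E_S}(J)` is an `S[T;f]`-module.  Then the `H`-special
ideals — the annihilators `(Ann_{E_S}(J) :_R W)` of `T`-stable submodules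
`Ann_{E_S}(J) ≤ W ≤ E_S` of the quotient — are exactly the ideals `(L :_R J)` where `L`
ranges over the `E_S`-special ideals of `R` contained in `J`. -/
theorem stmt17 {R : Type*} [CommRing R] [IsLocalRing R] [IsNoetherianRing R]
    (p : ℕ) [Fact p.Prime] [CharP R p]
    (hreg : IsRegularLocal R) (hcomp : IsAdicComplete (maximalIdeal R) R)
    (E : Type*) [AddCommGroup E] [Module R E]
    (hE : IsInjectiveHullOfResidueField R E)
    (φ : FrobeniusMap R E p) (hφ : IsNaturalFrobenius p E φ)
    (I : Ideal R) (u : R) (hu : u ∈ Submodule.colon (Ideal.frobPow p I) I)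
    (htf : ∀ x ∈ annIn I E, (∃ m, (fun y => u • φ.toFun y)^[m] x = 0) → x = 0)
    (J : Ideal R) (hJI : I ≤ J)
    (hJ : ∀ x ∈ annIn J E, u • φ.toFun x ∈ annIn J E) :
    { K : Ideal R |
        ∃ W : Submodule R E, annIn J E ≤ W ∧ W ≤ annIn I E ∧
          (∀ x ∈ W, u • φ.toFun x ∈ W) ∧ K = Submodule.colon (annIn J E) W } =
    { K : Ideal R |
        ∃ L : Ideal R,
          (∃ M : Submodule R E, M ≤ annIn I E ∧ (∀ x ∈ M, u • φ.toFun x ∈ M) ∧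
            L = M.annihilator) ∧
          L ≤ J ∧ K = Submodule.colon L J } :=
  stmt17_general p hcomp E hE φ I u J hJI hJ
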